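/- arXiv:1804.05241 — 5 statements merged into one kernel-verified Lean document; each statement's English description precedes it below -/
import Mathlib

section
/- If T_g > 0, T_l > 0, J ≥ 0, and p_i = (√T_l · p_g + √T_g · p_l)/(√T_g + √T_l), then the pressure-relaxation entropy source S_p = ((p_g − p_i)/T_g − (p_l − p_i)/T_l) · J·(p_g − p_l) is non-negative, and S_p = J·(p_g − p_l)²/√(T_g·T_l). -/
/-! With `a = √T_g` and `b = √T_l`, the interface pressure splits the gap `p_g - p_l` as
`p_g - p_i = a (p_g - p_l)/(a + b)` and `p_l - p_i = -b (p_g - p_l)/(a + b)`, so the thermodynamic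
force `(p_g - p_i)/a² - (p_l - p_i)/b²` collapses to `(p_g - p_l)/(a b)`. The entropy source is
therefore `J (p_g - p_l)² / (a b)`, a square times a nonnegative factor. -/

theorem sub_weighted_mean_div_sq_sub {K : Type*} [Field K] {a b : K}
    (ha : a ≠ 0) (hb : b ≠ 0) (hab : a + b ≠ 0) (x y : K) :
    (x - (b * x + a * y) / (a + b)) / a ^ 2 - (y - (b * x + a * y) / (a + b)) / b ^ 2
      = (x - y) / (a * b) := by
  field_simp
  ring

theorem pressure_relaxation_entropy_source_nonneg
    (Tg Tl pg pl J : ℝ) (hTg : 0 < Tg) (hTl : 0 < Tl) (hJ : 0 ≤ J)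
    (pi : ℝ)
    (hpi : pi = (Real.sqrt Tl * pg + Real.sqrt Tg * pl) / (Real.sqrt Tg + Real.sqrt Tl)) :
    0 ≤ ((pg - pi) / Tg - (pl - pi) / Tl) * (J * (pg - pl)) ∧
      ((pg - pi) / Tg - (pl - pi) / Tl) * (J * (pg - pl))
        = J * (pg - pl) ^ 2 / Real.sqrt (Tg * Tl) := by
  have ha : 0 < Real.sqrt Tg := Real.sqrt_pos.mpr hTg
  have hb : 0 < Real.sqrt Tl := Real.sqrt_pos.mpr hTl
  have hforce : (pg - pi) / Tg - (pl - pi) / Tl = (pg - pl) / Real.sqrt (Tg * Tl) := by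
    rw [hpi, Real.sqrt_mul hTg.le, ← Real.sq_sqrt hTg.le, ← Real.sq_sqrt hTl.le,
      Real.sqrt_sq ha.le, Real.sqrt_sq hb.le]
    exact sub_weighted_mean_div_sq_sub ha.ne' hb.ne' (by positivity) pg pl
  have hsource : ((pg - pi) / Tg - (pl - pi) / Tl) * (J * (pg - pl))
      = J * (pg - pl) ^ 2 / Real.sqrt (Tg * Tl) := by
    rw [hforce]
    ring
  exact ⟨hsource ▸ by positivity, hsource⟩
end

section
/- If T_g > 0, T_l > 0, M ≥ 0, and v_i = (√T_l·v_g + √T_g·v_l)/(√T_g + √T_l), then the friction entropy source S_v = ((v_i − v_g)/T_g − (v_i − v_l)/T_l)·M·(v_l − v_g) is non-negative, and equals M·(v_l − v_g)²/√(T_g·T_l). -/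
/-! The interface velocity weights each phase by the square root of the *other* temperature, which
makes the driving force `(v_i - v_g)/T_g - (v_i - v_l)/T_l` exactly `(v_l - v_g)/√(T_g T_l)`.
The entropy source is then this force times the friction `M (v_l - v_g)`, a square with a
non-negative coefficient. -/

theorem sub_weighted_mean_div_sq_sub_s3 {s t a b : ℝ} (hs : s ≠ 0) (ht : t ≠ 0) (hst : s + t ≠ 0) :
    ((t * a + s * b) / (s + t) - a) / s ^ 2 - ((t * a + s * b) / (s + t) - b) / t ^ 2
      = (b - a) / (s * t) := by
  field_simp
  ring

theorem interface_driving_force_eq {Tg Tl vg vl vi : ℝ} (hTg : 0 < Tg) (hTl : 0 < Tl)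
    (hvi : vi = (Real.sqrt Tl * vg + Real.sqrt Tg * vl) / (Real.sqrt Tg + Real.sqrt Tl)) :
    (vi - vg) / Tg - (vi - vl) / Tl = (vl - vg) / Real.sqrt (Tg * Tl) := by
  have hs := Real.sqrt_pos.mpr hTg
  have ht := Real.sqrt_pos.mpr hTl
  have h := sub_weighted_mean_div_sq_sub_s3 (a := vg) (b := vl) hs.ne' ht.ne' (add_pos hs ht).ne'
  rwa [Real.sq_sqrt hTg.le, Real.sq_sqrt hTl.le, ← Real.sqrt_mul hTg.le, ← hvi] at h

theorem friction_entropy_source_nonneg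
    (Tg Tl vg vl M : ℝ) (hTg : 0 < Tg) (hTl : 0 < Tl) (hM : 0 ≤ M)
    (vi : ℝ)
    (hvi : vi = (Real.sqrt Tl * vg + Real.sqrt Tg * vl) / (Real.sqrt Tg + Real.sqrt Tl)) :
    0 ≤ ((vi - vg) / Tg - (vi - vl) / Tl) * (M * (vl - vg)) ∧
      ((vi - vg) / Tg - (vi - vl) / Tl) * (M * (vl - vg))
        = M * (vl - vg) ^ 2 / Real.sqrt (Tg * Tl) := by
  have hsource : ((vi - vg) / Tg - (vi - vl) / Tl) * (M * (vl - vg))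
      = M * (vl - vg) ^ 2 / Real.sqrt (Tg * Tl) := by
    rw [interface_driving_force_eq hTg hTl hvi]
    ring
  exact ⟨hsource ▸ by positivity, hsource⟩
end

section
/- If T_g > 0, T_l > 0, K ≥ 0, μ_i = β·μ_g + (1−β)·μ_l with β ∈ [0,1], and v_i = (√T_l·v_g + √T_g·v_l)/(√T_g + √T_l), then the mass-transfer entropy source S_μ = [ (μ_i − μ_g + ½(v_i − v_g)²)/T_g − (μ_i − μ_l + ½(v_i − v_l)²)/T_l ]·K·(μ_l − μ_g) is non-negative. -/
/-! With `a = √T_g`, `b = √T_l`, the interface velocity satisfies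
`(v_i - v_g)/a = (v_l - v_g)/(a + b) = -(v_i - v_l)/b`, so the kinetic contributions
`½(v_i - v_g)²/T_g` and `½(v_i - v_l)²/T_l` cancel. What remains is
`K (μ_l - μ_g)² ((1 - β)/T_g + β/T_l)`, a product of non-negative factors. -/

theorem weighted_mean_sub_div {a b x y : ℝ} (ha : a ≠ 0) (hab : a + b ≠ 0) :
    ((b * x + a * y) / (a + b) - x) / a = (y - x) / (a + b) := by
  field_simp
  ring

theorem sq_sub_div_eq_of_sqrt_weighted_mean {Tg Tl vg vl : ℝ} (hTg : 0 < Tg) (hTl : 0 < Tl) :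
    ((√Tl * vg + √Tg * vl) / (√Tg + √Tl) - vg) ^ 2 / Tg
      = ((√Tl * vg + √Tg * vl) / (√Tg + √Tl) - vl) ^ 2 / Tl := by
  have hsum : √Tg + √Tl ≠ 0 := by positivity
  have hg := weighted_mean_sub_div (x := vg) (y := vl) (Real.sqrt_pos.2 hTg).ne' hsum
  have hl := weighted_mean_sub_div (x := vl) (y := vg) (Real.sqrt_pos.2 hTl).ne'
    (by rwa [add_comm])
  rw [add_comm (√Tg * vl), add_comm √Tl] at hl
  calc ((√Tl * vg + √Tg * vl) / (√Tg + √Tl) - vg) ^ 2 / Tg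
      = (((√Tl * vg + √Tg * vl) / (√Tg + √Tl) - vg) / √Tg) ^ 2 := by
        rw [div_pow, Real.sq_sqrt hTg.le]
    _ = (((√Tl * vg + √Tg * vl) / (√Tg + √Tl) - vl) / √Tl) ^ 2 := by
        rw [hg, hl]
        ring
    _ = ((√Tl * vg + √Tg * vl) / (√Tg + √Tl) - vl) ^ 2 / Tl := by
        rw [div_pow, Real.sq_sqrt hTl.le]

theorem mass_transfer_entropy_source_nonneg
    (Tg Tl mug mul vg vl K beta : ℝ)
    (hTg : 0 < Tg) (hTl : 0 < Tl) (hK : 0 ≤ K)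
    (hbeta0 : 0 ≤ beta) (hbeta1 : beta ≤ 1)
    (mui vi : ℝ)
    (hmui : mui = beta * mug + (1 - beta) * mul)
    (hvi : vi = (Real.sqrt Tl * vg + Real.sqrt Tg * vl) / (Real.sqrt Tg + Real.sqrt Tl)) :
    0 ≤ ((mui - mug + (1/2) * (vi - vg) ^ 2) / Tg
          - (mui - mul + (1/2) * (vi - vl) ^ 2) / Tl) * (K * (mul - mug)) := by
  have hkinetic : (vi - vg) ^ 2 / Tg = (vi - vl) ^ 2 / Tl := by
    rw [hvi]
    exact sq_sub_div_eq_of_sqrt_weighted_mean hTg hTl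
  have hsource : ((mui - mug + (1/2) * (vi - vg) ^ 2) / Tg
      - (mui - mul + (1/2) * (vi - vl) ^ 2) / Tl) * (K * (mul - mug))
      = ((1 - beta) / Tg + beta / Tl) * K * (mul - mug) ^ 2 := by
    rw [hmui]
    linear_combination (1/2 * K * (mul - mug)) * hkinetic
  have hweight : 0 ≤ (1 - beta) / Tg + beta / Tl := by
    have := sub_nonneg.2 hbeta1
    positivity
  rw [hsource]
  exact mul_nonneg (mul_nonneg hweight hK) (sq_nonneg _)
end

section
/- If J, K, M, H ≥ 0, T_g, T_l > 0, β ∈ [0,1], and both the interface pressure p_i and interface velocity v_i are the square-root-of-temperature weighted averages, and μ_i = β·μ_g + (1−β)·μ_l, then the total entropy source S = S_p + S_μ + S_v + S_T is non-negative, where S_p = ((p_g−p_i)/T_g − (p_l−p_i)/T_l)·J·(p_g−p_l), S_μ = [(μ_i−μ_g+½(v_i−v_g)²)/T_g − (μ_i−μ_l+½(v_i−v_l)²)/T_l]·K·(μ_l−μ_g), S_v = ((v_i−v_g)/T_g − (v_i−v_l)/T_l)·M·(v_l−v_g), S_T = (1/T_g − 1/T_l)·H·(T_l−T_g). -/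
/-!
With `a = √T_g` and `b = √T_l`, the interface average `w = (b x + a y)/(a + b)` of two states
satisfies `w - x = a (y - x)/(a + b)` and `w - y = b (x - y)/(a + b)`. Hence each affinity
collapses to a multiple of the corresponding jump: `(w - x)/a² - (w - y)/b² = (y - x)/(ab)`, and the
kinetic terms in the chemical affinity cancel because `(w - x)²/a² = (w - y)²/b²`. Each of the four
sources is then a nonnegative coefficient times the square of a jump.
-/

open Real

noncomputable def interfaceAverage (Tg Tl x y : ℝ) : ℝ :=
  (√Tl * x + √Tg * y) / (√Tg + √Tl)

section InterfaceAverage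

variable {Tg Tl : ℝ}

theorem interfaceAverage_sub_left (hTg : 0 < Tg) (x y : ℝ) :
    interfaceAverage Tg Tl x y - x = √Tg * (y - x) / (√Tg + √Tl) := by
  have : 0 < √Tg + √Tl := add_pos_of_pos_of_nonneg (sqrt_pos.2 hTg) (sqrt_nonneg _)
  rw [interfaceAverage, eq_div_iff this.ne', sub_mul, div_mul_cancel₀ _ this.ne']
  ring

theorem interfaceAverage_sub_right (hTg : 0 < Tg) (x y : ℝ) :
    interfaceAverage Tg Tl x y - y = √Tl * (x - y) / (√Tg + √Tl) := by
  have : 0 < √Tg + √Tl := add_pos_of_pos_of_nonneg (sqrt_pos.2 hTg) (sqrt_nonneg _)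
  rw [interfaceAverage, eq_div_iff this.ne', sub_mul, div_mul_cancel₀ _ this.ne']
  ring

theorem interfaceAverage_sub_div_sub (hTg : 0 < Tg) (hTl : 0 < Tl) (x y : ℝ) :
    (interfaceAverage Tg Tl x y - x) / Tg - (interfaceAverage Tg Tl x y - y) / Tl
      = (y - x) / √(Tg * Tl) := by
  have ha := sqrt_pos.2 hTg
  have hb := sqrt_pos.2 hTl
  rw [interfaceAverage_sub_left hTg, interfaceAverage_sub_right hTg, sqrt_mul hTg.le,
    ← sq_sqrt hTg.le, ← sq_sqrt hTl.le, sqrt_sq ha.le, sqrt_sq hb.le]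
  field_simp
  ring

theorem sq_interfaceAverage_sub_div_eq (hTg : 0 < Tg) (hTl : 0 < Tl) (x y : ℝ) :
    (interfaceAverage Tg Tl x y - x) ^ 2 / Tg = (interfaceAverage Tg Tl x y - y) ^ 2 / Tl := by
  rw [interfaceAverage_sub_left hTg, interfaceAverage_sub_right hTg, div_pow, div_pow, mul_pow,
    mul_pow, sq_sqrt hTg.le, sq_sqrt hTl.le]
  field_simp
  ring

end InterfaceAverage

theorem mul_mul_nonneg_of_eq_mul_self {A c d k : ℝ} (hc : 0 ≤ c) (hk : 0 ≤ k) (hA : A = d * c) :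
    0 ≤ A * (k * d) := by
  rw [hA, show d * c * (k * d) = c * k * d ^ 2 by ring]
  positivity

theorem second_law_total_entropy_source_nonneg
    (J K M H Tg Tl pg pl vg vl mug mul beta : ℝ)
    (hJ : 0 ≤ J) (hK : 0 ≤ K) (hM : 0 ≤ M) (hH : 0 ≤ H)
    (hTg : 0 < Tg) (hTl : 0 < Tl)
    (hbeta0 : 0 ≤ beta) (hbeta1 : beta ≤ 1)
    (pi vi mui : ℝ)
    (hpi : pi = (Real.sqrt Tl * pg + Real.sqrt Tg * pl) / (Real.sqrt Tg + Real.sqrt Tl))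
    (hvi : vi = (Real.sqrt Tl * vg + Real.sqrt Tg * vl) / (Real.sqrt Tg + Real.sqrt Tl))
    (hmui : mui = beta * mug + (1 - beta) * mul) :
    0 ≤ ((pg - pi) / Tg - (pl - pi) / Tl) * (J * (pg - pl))
        + ((mui - mug + (1/2) * (vi - vg) ^ 2) / Tg
            - (mui - mul + (1/2) * (vi - vl) ^ 2) / Tl) * (K * (mul - mug))
        + ((vi - vg) / Tg - (vi - vl) / Tl) * (M * (vl - vg))
        + (1 / Tg - 1 / Tl) * (H * (Tl - Tg)) := by
  have hpi : pi = interfaceAverage Tg Tl pg pl := hpi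
  have hvi : vi = interfaceAverage Tg Tl vg vl := hvi
  subst hpi hvi hmui
  have hs : 0 ≤ (√(Tg * Tl))⁻¹ := by positivity
  have hβ : 0 ≤ (1 - beta) / Tg + beta / Tl := by
    have := sub_nonneg.2 hbeta1
    positivity
  refine add_nonneg (add_nonneg (add_nonneg ?pressure ?chemical) ?velocity) ?temperature
  case pressure =>
    refine mul_mul_nonneg_of_eq_mul_self hs hJ ?_
    linear_combination -interfaceAverage_sub_div_sub hTg hTl pg pl
  case chemical =>
    refine mul_mul_nonneg_of_eq_mul_self hβ hK ?_
    linear_combination (1 / 2 : ℝ) * sq_interfaceAverage_sub_div_eq hTg hTl vg vl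
  case velocity =>
    exact mul_mul_nonneg_of_eq_mul_self hs hM
      ((interfaceAverage_sub_div_sub hTg hTl vg vl).trans (div_eq_mul_inv _ _))
  case temperature =>
    refine mul_mul_nonneg_of_eq_mul_self (by positivity : 0 ≤ (Tg * Tl)⁻¹) hH ?_
    field_simp
end

section
/- Suppose the mass balance ∂_t(αρ) + ∂_x(αρv) = K holds and v satisfies ∂_t v + v∂_x v = (αρ)⁻¹[(p_i − p)∂_x α − α ∂_x p + (v_i − v)K + M] with αρ > 0. Then the kinetic energy E_kin = ½αρv² satisfies ∂_t E_kin + ∂_x(E_kin v) + αv ∂_x p + v(p − p_i)∂_x α = (v_i v − ½v²)K + vM. -/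
/-- Partial derivative with respect to time (second argument). -/
noncomputable def pt (f : ℝ → ℝ → ℝ) (x t : ℝ) : ℝ := deriv (fun τ => f x τ) t

/-- Partial derivative with respect to space (first argument). -/
noncomputable def px (f : ℝ → ℝ → ℝ) (x t : ℝ) : ℝ := deriv (fun y => f y t) x

/-! With `m = αρ`, `∂ₜ(½mv²) + ∂ₓ(½mv²·v) = ½v²(∂ₜm + ∂ₓ(mv)) + mv(∂ₜv + v∂ₓv)` by the product rule.
The first bracket is `K` by the mass balance, and `m` times the second is the right-hand side
of the velocity equation, since `m ≠ 0`; what remains is ring arithmetic. -/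

open Function

section PartialDerivatives

variable {f m v : ℝ → ℝ → ℝ} {x t : ℝ}

theorem hasDerivAt_pt (hf : DifferentiableAt ℝ (uncurry f) (x, t)) :
    HasDerivAt (fun τ => f x τ) (pt f x t) t :=
  (hf.comp t ((differentiableAt_const x).prodMk differentiableAt_id)).hasDerivAt

theorem hasDerivAt_px (hf : DifferentiableAt ℝ (uncurry f) (x, t)) :
    HasDerivAt (fun y => f y t) (px f x t) x := by
  have hembed : DifferentiableAt ℝ (fun y : ℝ => (y, t)) x :=
    differentiableAt_id.prodMk (differentiableAt_const t)
  exact (hf.comp x hembed).hasDerivAt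

theorem pt_add_px_kineticEnergy (hm : DifferentiableAt ℝ (uncurry m) (x, t))
    (hv : DifferentiableAt ℝ (uncurry v) (x, t)) :
    pt (fun x t => 1 / 2 * m x t * v x t ^ 2) x t
        + px (fun x t => 1 / 2 * m x t * v x t ^ 2 * v x t) x t
      = 1 / 2 * v x t ^ 2 * (pt m x t + px (fun x t => m x t * v x t) x t)
        + m x t * v x t * (pt v x t + v x t * px v x t) := by
  have hmx := hasDerivAt_px hm
  have hvx := hasDerivAt_px hv
  have hEt : HasDerivAt (fun τ => 1 / 2 * m x τ * v x τ ^ 2) _ t :=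
    ((hasDerivAt_pt hm).const_mul (1 / 2)).mul ((hasDerivAt_pt hv).pow 2)
  have hEx : HasDerivAt (fun y => 1 / 2 * m y t * v y t ^ 2 * v y t) _ x :=
    ((hmx.const_mul (1 / 2)).mul (hvx.pow 2)).mul hvx
  have hmvx : HasDerivAt (fun y => m y t * v y t) _ x := hmx.mul hvx
  simp only [pt, px, Pi.mul_apply, Pi.pow_apply] at hEt hEx hmvx ⊢
  rw [hEt.deriv, hEx.deriv, hmvx.deriv]
  ring

end PartialDerivatives

theorem kinetic_energy_evolution_general
    (α ρ v p pI vI K M : ℝ → ℝ → ℝ)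
    (hα : ContDiff ℝ 1 (Function.uncurry α)) (hρ : ContDiff ℝ 1 (Function.uncurry ρ))
    (hv : ContDiff ℝ 1 (Function.uncurry v))
    (hpos : ∀ x t, 0 < α x t * ρ x t)
    (hmass : ∀ x t, pt (fun x t => α x t * ρ x t) x t
        + px (fun x t => α x t * ρ x t * v x t) x t = K x t)
    (hvel : ∀ x t, pt v x t + v x t * px v x t
        = (α x t * ρ x t)⁻¹ *
            ((pI x t - p x t) * px α x t - α x t * px p x t
              + (vI x t - v x t) * K x t + M x t)) :
    ∀ x t, pt (fun x t => (1/2) * α x t * ρ x t * v x t ^ 2) x t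
        + px (fun x t => (1/2) * α x t * ρ x t * v x t ^ 2 * v x t) x t
        + α x t * v x t * px p x t
        + v x t * (p x t - pI x t) * px α x t
      = (vI x t * v x t - (1/2) * v x t ^ 2) * K x t + v x t * M x t := by
  intro x t
  have hdiff {f : ℝ → ℝ → ℝ} (hf : ContDiff ℝ 1 (uncurry f)) :
      DifferentiableAt ℝ (uncurry f) (x, t) :=
    (hf.differentiable one_ne_zero).differentiableAt
  have hE : (fun x t => (1/2) * α x t * ρ x t * v x t ^ 2)
      = fun x t => 1 / 2 * (α x t * ρ x t) * v x t ^ 2 := by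
    funext; ring
  have hflux : (fun x t => (1/2) * α x t * ρ x t * v x t ^ 2 * v x t)
      = fun x t => 1 / 2 * (α x t * ρ x t) * v x t ^ 2 * v x t := by
    funext; ring
  have hmomentum : α x t * ρ x t * (pt v x t + v x t * px v x t)
      = (pI x t - p x t) * px α x t - α x t * px p x t
        + (vI x t - v x t) * K x t + M x t := by
    rw [hvel, mul_inv_cancel_left₀ (hpos x t).ne']
  rw [hE, hflux, pt_add_px_kineticEnergy (m := fun x t => α x t * ρ x t)
    ((hdiff hα).mul (hdiff hρ)) (hdiff hv), hmass]
  linear_combination v x t * hmomentum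

theorem kinetic_energy_evolution
    (α ρ v p pI vI K M : ℝ → ℝ → ℝ)
    (hα : ContDiff ℝ 1 (Function.uncurry α)) (hρ : ContDiff ℝ 1 (Function.uncurry ρ))
    (hv : ContDiff ℝ 1 (Function.uncurry v)) (hp : ContDiff ℝ 1 (Function.uncurry p))
    (hpos : ∀ x t, 0 < α x t * ρ x t)
    (hmass : ∀ x t, pt (fun x t => α x t * ρ x t) x t
        + px (fun x t => α x t * ρ x t * v x t) x t = K x t)
    (hvel : ∀ x t, pt v x t + v x t * px v x t
        = (α x t * ρ x t)⁻¹ *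
            ((pI x t - p x t) * px α x t - α x t * px p x t
              + (vI x t - v x t) * K x t + M x t)) :
    ∀ x t, pt (fun x t => (1/2) * α x t * ρ x t * v x t ^ 2) x t
        + px (fun x t => (1/2) * α x t * ρ x t * v x t ^ 2 * v x t) x t
        + α x t * v x t * px p x t
        + v x t * (p x t - pI x t) * px α x t
      = (vI x t * v x t - (1/2) * v x t ^ 2) * K x t + v x t * M x t :=
  kinetic_energy_evolution_general α ρ v p pI vI K M hα hρ hv hpos hmass hvel
end
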